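/- arXiv:1807.05755 — 4 statements merged into one kernel-verified Lean document; each statement's English description precedes it below -/
import Mathlib

section
/- Let G = C_n(S) be a non-complete circulant graph with complement generating set S̄ = {1,…,⌊n/2⌋} \ S, and let Δ be the independence complex of G. Then Δ is pure of dimension 2 if and only if for every a with |a|_n ∈ S̄ the following hold: (1) there exists b with |b|_n ∈ S̄ and |b−a|_n ∈ S̄; and (2) for all b, c with b ≢ c (mod n), |b|_n, |c|_n, |b−a|_n, |c−a|_n ∈ S̄, one has |b−c|_n ∉ S̄. -/
/-- The "reduced absolute value" |x|_n = min(x mod n, n - x mod n). -/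
def redAbs (n : ℕ) (x : ZMod n) : ℕ := min x.val (n - x.val)

/-- The circulant graph C_n(S). -/
def circulant (n : ℕ) (S : Finset ℕ) : SimpleGraph (ZMod n) :=
  SimpleGraph.fromRel (fun i j => redAbs n (j - i) ∈ S)

/-- `s` is an independent set of C_n(S). -/
def IsIndep {n : ℕ} (S : Finset ℕ) (s : Finset (ZMod n)) : Prop :=
  ∀ x ∈ s, ∀ y ∈ s, x ≠ y → ¬ (circulant n S).Adj x y

/-- `s` is a maximal independent set of C_n(S). -/
def IsMaxIndep {n : ℕ} (S : Finset ℕ) (s : Finset (ZMod n)) : Prop :=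
  IsIndep S s ∧ ∀ t : Finset (ZMod n), IsIndep S t → s ⊆ t → t = s

/-- The complement generating set S̄ = {1,…,⌊n/2⌋} \ S. -/
def Sbar (n : ℕ) (S : Finset ℕ) : Finset ℕ := Finset.Icc 1 (n / 2) \ S

/-!
Independent sets of `C_n(S)` are the cliques of its complement, in which `x` and `y` are adjacent
iff `|y - x|_n ∈ S̄`. In a finite graph without isolated vertices every maximal clique is a triangle
iff every edge lies in a triangle and there is no `K₄`. The complement of a circulant graph is
invariant under translation, so both conditions need only be checked at edges through `0`, where
they read as (1) and (2); `S̄ ≠ ∅` is exactly what rules out isolated vertices.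
-/
namespace SimpleGraph

variable {V : Type*} {H : SimpleGraph V}

theorem exists_not_adj_of_maximal_isClique {s : Finset V}
    (hs : Maximal (fun t : Finset V => H.IsClique (t : Set V)) s) (u : V) :
    ∃ x ∈ s, ¬ H.Adj u x := by
  classical
  by_contra! h
  have hu : u ∉ s := fun hu => H.loopless.irrefl u (h u hu)
  have hins : H.IsClique (insert u s : Finset V) := by
    rw [Finset.coe_insert]
    exact hs.prop.insert fun x hx _ => h x hx
  exact hu (hs.eq_of_ge hins (Finset.subset_insert u s) ▸ Finset.mem_insert_self u s)

theorem card_le_of_isClique_of_cliqueFree {n : ℕ} (hH : H.CliqueFree (n + 1)) {s : Finset V}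
    (hs : H.IsClique (s : Set V)) : s.card ≤ n := by
  by_contra! hlt
  obtain ⟨t, hts, ht⟩ := Finset.exists_subset_card_eq hlt
  exact hH t ⟨hs.subset hts, ht⟩

theorem card_eq_three_of_maximal_isClique [Nonempty V] (hadj : ∀ v, ∃ w, H.Adj v w)
    (htri : ∀ v w, H.Adj v w → ∃ u, H.Adj v u ∧ H.Adj w u) (h4 : H.CliqueFree 4)
    {s : Finset V} (hs : Maximal (fun t : Finset V => H.IsClique (t : Set V)) s) :
    s.card = 3 := by
  classical
  have hle : s.card ≤ 3 := card_le_of_isClique_of_cliqueFree h4 hs.prop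
  have hne : s.card ≠ 0 := by
    obtain ⟨x, hx, -⟩ := exists_not_adj_of_maximal_isClique hs (Classical.arbitrary V)
    exact Finset.card_ne_zero_of_mem hx
  have hne1 : s.card ≠ 1 := by
    rintro hcard
    obtain ⟨v, rfl⟩ := Finset.card_eq_one.1 hcard
    obtain ⟨w, hvw⟩ := hadj v
    obtain ⟨x, hx, hwx⟩ := exists_not_adj_of_maximal_isClique hs w
    rw [Finset.mem_singleton.1 hx] at hwx
    exact hwx hvw.symm
  have hne2 : s.card ≠ 2 := by
    rintro hcard
    obtain ⟨v, w, hvw, rfl⟩ := Finset.card_eq_two.1 hcard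
    obtain ⟨u, hvu, hwu⟩ := htri v w (hs.prop (by simp) (by simp) hvw)
    obtain ⟨x, hx, hux⟩ := exists_not_adj_of_maximal_isClique hs u
    rcases Finset.mem_insert.1 hx with rfl | hx
    · exact hux hvu.symm
    · exact hux (Finset.mem_singleton.1 hx ▸ hwu.symm)
  omega

theorem forall_maximal_isClique_card_eq_three_iff [Finite V] [Nonempty V]
    (hadj : ∀ v, ∃ w, H.Adj v w) :
    (∀ s : Finset V, Maximal (fun t : Finset V => H.IsClique (t : Set V)) s → s.card = 3) ↔
      (∀ v w, H.Adj v w → ∃ u, H.Adj v u ∧ H.Adj w u) ∧ H.CliqueFree 4 := by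
  classical
  refine ⟨fun h => ?_, fun ⟨htri, h4⟩ s hs => card_eq_three_of_maximal_isClique hadj htri h4 hs⟩
  have hext {s : Finset V} (hs : H.IsClique (s : Set V)) :
      ∃ t : Finset V, s ⊆ t ∧ H.IsClique (t : Set V) ∧ t.card = 3 := by
    obtain ⟨t, hst, ht⟩ :=
      Finite.exists_le_maximal (p := fun t : Finset V => H.IsClique (t : Set V)) hs
    exact ⟨t, hst, ht.prop, h t ht⟩
  refine ⟨fun v w hvw => ?_, fun s hs => ?_⟩
  · have hpair : H.IsClique (({v, w} : Finset V) : Set V) := by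
      rw [Finset.coe_pair]; exact isClique_pair.2 fun _ => hvw
    obtain ⟨t, hst, ht, hcard⟩ := hext hpair
    have hlt : ({v, w} : Finset V).card < t.card := by
      rw [Finset.card_pair hvw.ne, hcard]; norm_num
    obtain ⟨u, hut, hu⟩ := Finset.exists_mem_notMem_of_card_lt_card hlt
    have hvu : v ≠ u := fun h => hu (h ▸ by simp)
    have hwu : w ≠ u := fun h => hu (h ▸ by simp)
    exact ⟨u, ht (hst (by simp)) hut hvu, ht (hst (by simp)) hut hwu⟩
  · obtain ⟨t, hst, -, hcard⟩ := hext hs.isClique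
    have := Finset.card_le_card hst
    rw [hs.card_eq] at this
    omega

end SimpleGraph

section Circulant

variable {n : ℕ} {S : Finset ℕ}

theorem redAbs_neg [NeZero n] (x : ZMod n) : redAbs n (-x) = redAbs n x := by
  rcases eq_or_ne x 0 with rfl | hx
  · simp
  · rw [redAbs, redAbs, ZMod.neg_val, if_neg hx, Nat.sub_sub_self (ZMod.val_lt x).le,
      Nat.min_comm]

theorem redAbs_natCast {k : ℕ} (hk : k ≤ n / 2) (hk0 : 0 < k) : redAbs n k = k := by
  rw [redAbs, ZMod.val_cast_of_lt (by omega)]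
  omega

theorem redAbs_mem_Icc_iff [NeZero n] {x : ZMod n} :
    redAbs n x ∈ Finset.Icc 1 (n / 2) ↔ x ≠ 0 := by
  have hlt := ZMod.val_lt x
  rw [Finset.mem_Icc, redAbs, Ne, ← ZMod.val_eq_zero]
  omega

theorem compl_circulant_adj [NeZero n] {x y : ZMod n} :
    (circulant n S)ᶜ.Adj x y ↔ redAbs n (y - x) ∈ Sbar n S := by
  rw [SimpleGraph.compl_adj, circulant, SimpleGraph.fromRel_adj, ← neg_sub y x, redAbs_neg,
    or_self, Sbar, Finset.mem_sdiff, redAbs_mem_Icc_iff, sub_ne_zero]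
  tauto

theorem isMaxIndep_iff_maximal {s : Finset (ZMod n)} :
    IsMaxIndep S s ↔
      Maximal (fun t : Finset (ZMod n) => (circulant n S)ᶜ.IsClique (t : Set (ZMod n))) s := by
  have hindep (t : Finset (ZMod n)) :
      IsIndep S t ↔ (circulant n S)ᶜ.IsClique (t : Set (ZMod n)) := by
    rw [SimpleGraph.isClique_compl]; rfl
  simp only [IsMaxIndep, Maximal, hindep]
  exact and_congr_right fun _ =>
    ⟨fun h t ht hst => (h t ht hst).le, fun h t ht hst => Finset.Subset.antisymm (h ht hst) hst⟩

theorem compl_circulant_exists_adj [NeZero n] (hnc : (Sbar n S).Nonempty) (v : ZMod n) :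
    ∃ w, (circulant n S)ᶜ.Adj v w := by
  obtain ⟨k, hk⟩ := hnc
  have hkIcc := Finset.mem_Icc.1 (Finset.mem_sdiff.1 hk).1
  refine ⟨v + k, ?_⟩
  rwa [compl_circulant_adj, add_sub_cancel_left, redAbs_natCast hkIcc.2 hkIcc.1]

theorem compl_circulant_adj_exists_triangle_iff [NeZero n] :
    (∀ v w, (circulant n S)ᶜ.Adj v w →
        ∃ u, (circulant n S)ᶜ.Adj v u ∧ (circulant n S)ᶜ.Adj w u) ↔
      ∀ a : ZMod n, redAbs n a ∈ Sbar n S →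
        ∃ b : ZMod n, redAbs n b ∈ Sbar n S ∧ redAbs n (b - a) ∈ Sbar n S := by
  simp only [compl_circulant_adj]
  refine ⟨fun h a ha => ?_, fun h v w hvw => ?_⟩
  · simpa using h 0 a (by simpa using ha)
  · obtain ⟨b, hb, hba⟩ := h (w - v) hvw
    exact ⟨v + b, by rwa [add_sub_cancel_left], by rwa [show v + b - w = b - (w - v) by ring]⟩

theorem compl_circulant_cliqueFree_four_iff [NeZero n] :
    (circulant n S)ᶜ.CliqueFree 4 ↔
      ∀ a : ZMod n, redAbs n a ∈ Sbar n S →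
        ∀ b c : ZMod n, b ≠ c → redAbs n b ∈ Sbar n S → redAbs n c ∈ Sbar n S →
          redAbs n (b - a) ∈ Sbar n S → redAbs n (c - a) ∈ Sbar n S →
          redAbs n (b - c) ∉ Sbar n S := by
  classical
  refine ⟨fun h4 a ha b c _ hb hc hba hca hbc => ?_, fun h s hs => ?_⟩
  · have hadj_zero {x : ZMod n} : redAbs n x ∈ Sbar n S ↔ (circulant n S)ᶜ.Adj 0 x := by
      rw [compl_circulant_adj, sub_zero]
    rw [← compl_circulant_adj] at hba hca hbc
    rw [hadj_zero] at ha hb hc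
    have habc := SimpleGraph.is3Clique_triple_iff.2 ⟨hba, hca, hbc.symm⟩
    refine h4 (insert 0 {a, b, c}) (habc.insert ?_)
    simp only [Finset.mem_insert, Finset.mem_singleton]
    rintro x (rfl | rfl | rfl) <;> assumption
  · obtain ⟨p, q, r, w, hpq, hpr, hpw, hqr, hqw, hrw, rfl⟩ := Finset.card_eq_four.1 hs.card_eq
    have hadj {x y : ZMod n} (hx : x ∈ ({p, q, r, w} : Finset (ZMod n)))
        (hy : y ∈ ({p, q, r, w} : Finset (ZMod n))) (hxy : x ≠ y) :
        redAbs n (y - x) ∈ Sbar n S :=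
      compl_circulant_adj.1 (hs.isClique hx hy hxy)
    refine h (q - p) (hadj (by simp) (by simp) hpq) (r - p) (w - p) (sub_left_injective.ne hrw)
      (hadj (by simp) (by simp) hpr) (hadj (by simp) (by simp) hpw) ?_ ?_ ?_
    · rw [sub_sub_sub_cancel_right]; exact hadj (by simp) (by simp) hqr
    · rw [sub_sub_sub_cancel_right]; exact hadj (by simp) (by simp) hqw
    · rw [sub_sub_sub_cancel_right]; exact hadj (by simp) (by simp) hrw.symm

end Circulant

theorem pure_two_dim_iff_general (n : ℕ) (S : Finset ℕ) (hnc : (Sbar n S).Nonempty) :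
    (∀ s : Finset (ZMod n), IsMaxIndep S s → s.card = 3) ↔
      (∀ a : ZMod n, redAbs n a ∈ Sbar n S →
        (∃ b : ZMod n, redAbs n b ∈ Sbar n S ∧ redAbs n (b - a) ∈ Sbar n S) ∧
        (∀ b c : ZMod n, b ≠ c → redAbs n b ∈ Sbar n S → redAbs n c ∈ Sbar n S →
          redAbs n (b - a) ∈ Sbar n S → redAbs n (c - a) ∈ Sbar n S →
          redAbs n (b - c) ∉ Sbar n S)) := by
  have : NeZero n := ⟨by rintro rfl; simp [Sbar] at hnc⟩
  simp only [isMaxIndep_iff_maximal]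
  rw [SimpleGraph.forall_maximal_isClique_card_eq_three_iff (compl_circulant_exists_adj hnc),
    compl_circulant_adj_exists_triangle_iff, compl_circulant_cliqueFree_four_iff]
  exact ⟨fun ⟨htri, h4⟩ a ha => ⟨htri a ha, h4 a ha⟩,
    fun h => ⟨fun a ha => (h a ha).1, fun a ha => (h a ha).2⟩⟩

theorem pure_two_dim_iff (n : ℕ) (hn : 0 < n) (S : Finset ℕ)
    (hS : S ⊆ Finset.Icc 1 (n / 2)) (hnc : (Sbar n S).Nonempty) :
    (∀ s : Finset (ZMod n), IsMaxIndep S s → s.card = 3) ↔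
      (∀ a : ZMod n, redAbs n a ∈ Sbar n S →
        (∃ b : ZMod n, redAbs n b ∈ Sbar n S ∧ redAbs n (b - a) ∈ Sbar n S) ∧
        (∀ b c : ZMod n, b ≠ c → redAbs n b ∈ Sbar n S → redAbs n c ∈ Sbar n S →
          redAbs n (b - a) ∈ Sbar n S → redAbs n (c - a) ∈ Sbar n S →
          redAbs n (b - c) ∉ Sbar n S)) :=
  pure_two_dim_iff_general n S hnc
end

section
/- Let n, f_1, f_2 be positive integers with n > 6 such that f_1 ∈ {n·a/2 : a ∈ ℕ} and f_2 ∈ {n·b/3 : b ∈ ℕ}. Then −1 + n − f_1 + f_2 ≠ 0. -/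
theorem euler_char_arith (n f1 f2 : ℕ) (hn : 6 < n) (hf1 : 0 < f1) (hf2 : 0 < f2)
    (ha : ∃ a : ℕ, 2 * f1 = n * a) (hb : ∃ b : ℕ, 3 * f2 = n * b) :
    (-1 + (n : ℤ) - (f1 : ℤ) + (f2 : ℤ)) ≠ 0 := by
  intro h
  obtain ⟨a, ha⟩ := ha
  obtain ⟨b, hb⟩ := hb
  have ha' : (2 : ℤ) * f1 = n * a := by exact_mod_cast ha
  have hb' : (3 : ℤ) * f2 = n * b := by exact_mod_cast hb
  have hdvd : (n : ℤ) ∣ 6 * ((n : ℤ) - 1) := by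
    refine ⟨3 * a - 2 * b, ?_⟩
    have hf : (f1 : ℤ) - f2 = n - 1 := by linarith
    linarith [hf, ha', hb']
  have h6 : (n : ℤ) ∣ 6 := by
    have h2 : (n : ℤ) ∣ 6 * (n : ℤ) - 6 * ((n : ℤ) - 1) :=
      dvd_sub (Dvd.intro 6 (mul_comm (n:ℤ) 6)) hdvd
    have e : 6 * (n : ℤ) - 6 * ((n : ℤ) - 1) = 6 := by ring
    rwa [e] at h2
  have := Int.le_of_dvd (by norm_num) h6
  omega
end

section
/- Let m ≥ 3, n = 3·2^m, S̄ = {1, 2, 4, …, 2^m, 2^m − 1}, and G = C_n(S̄) (the complement circulant). Then the set {0, 2^m, 2^{m+1}} is a triangle (3-clique) of G, and it is the unique clique {0,a,b} of G with |a|_n = |b|_n = |b−a|_n. -/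
lemma triple_card_ne {α : Type*} [DecidableEq α] {x y z : α}
    (h : ({x, y, z} : Finset α).card = 3) : x ≠ y ∧ x ≠ z ∧ y ≠ z := by
  refine ⟨?_, ?_, ?_⟩ <;> rintro rfl
  · rw [Finset.insert_idem] at h
    have := Finset.card_insert_le x ({z} : Finset α)
    simp at this; omega
  · rw [Finset.pair_comm y x, Finset.insert_idem] at h
    have := Finset.card_insert_le x ({y} : Finset α)
    simp at this; omega
  · rw [show ({x, y, y} : Finset α) = {x, y} by simp] at h
    have := Finset.card_insert_le x ({y} : Finset α)
    simp at this; omega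

lemma redAbs_cases {n : ℕ} [NeZero n] (x : ZMod n) :
    x = ((redAbs n x : ℕ) : ZMod n) ∨ x = -((redAbs n x : ℕ) : ZMod n) := by
  have hv : x.val < n := ZMod.val_lt x
  unfold redAbs
  rcases le_total x.val (n - x.val) with h | h
  · left; rw [min_eq_left h, ZMod.natCast_zmod_val]
  · right
    rw [min_eq_right h, Nat.cast_sub (by omega), ZMod.natCast_self, ZMod.natCast_zmod_val]
    ring
  

lemma redAbs_two_mul_le {n : ℕ} [NeZero n] (x : ZMod n) : 2 * redAbs n x ≤ n := by
  have := ZMod.val_lt x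
  unfold redAbs
  omega

lemma three_eq {n d : ℕ} (hn : 0 < n) (hdvd : n ∣ 3 * d) (hd0 : 0 < d) (h2 : 2 * d ≤ n) :
    3 * d = n := by
  have h1 : n ≤ 3 * d := Nat.le_of_dvd (by omega) hdvd
  have h2' : n ∣ (3 * d - n) := Nat.dvd_sub hdvd dvd_rfl
  have h3 := Nat.eq_zero_of_dvd_of_lt h2' (by omega)
  omega

theorem power_family_unique_equilateral (m n : ℕ) (hm : 3 ≤ m) (hn : n = 3 * 2 ^ m)
    (Sb : Finset ℕ)
    (hSb : Sb = (Finset.range (m + 1)).image (fun i => 2 ^ i) ∪ {2 ^ m - 1}) :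
    (circulant n Sb).IsNClique 3 {0, (2 ^ m : ZMod n), (2 ^ (m + 1) : ZMod n)} ∧
    (∀ a b : ZMod n, (circulant n Sb).IsNClique 3 {0, a, b} →
      redAbs n a = redAbs n b → redAbs n b = redAbs n (b - a) →
      ({0, a, b} : Finset (ZMod n)) = {0, (2 ^ m : ZMod n), (2 ^ (m + 1) : ZMod n)}) := by
  subst hn hSb
  have hP : 0 < 2 ^ m := pow_pos (by norm_num) m
  haveI : NeZero (3 * 2 ^ m) := ⟨by positivity⟩
  have hc1 : ((2 ^ m : ℕ) : ZMod (3 * 2 ^ m)) = (2 ^ m : ZMod (3 * 2 ^ m)) := by push_cast; ring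
  have hc2 : ((2 ^ (m + 1) : ℕ) : ZMod (3 * 2 ^ m)) = (2 ^ (m + 1) : ZMod (3 * 2 ^ m)) := by
    push_cast; ring
  have hv1 : ((2 ^ m : ℕ) : ZMod (3 * 2 ^ m)).val = 2 ^ m := ZMod.val_cast_of_lt (by omega)
  have hv2 : ((2 ^ (m + 1) : ℕ) : ZMod (3 * 2 ^ m)).val = 2 ^ (m + 1) :=
    ZMod.val_cast_of_lt (by rw [pow_succ]; omega)
  have hr1 : redAbs (3 * 2 ^ m) (2 ^ m : ZMod (3 * 2 ^ m)) = 2 ^ m := by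
    rw [← hc1]; unfold redAbs; rw [hv1]; omega
  have hr2 : redAbs (3 * 2 ^ m) (2 ^ (m + 1) : ZMod (3 * 2 ^ m)) = 2 ^ m := by
    rw [← hc2]; unfold redAbs; rw [hv2, pow_succ]; omega
  have hmem : (2 ^ m : ℕ) ∈ (Finset.range (m + 1)).image (fun i => 2 ^ i) ∪ {2 ^ m - 1} :=
    Finset.mem_union_left _ (Finset.mem_image.mpr ⟨m, Finset.mem_range.mpr (Nat.lt_succ_self m), rfl⟩)
  have hzero : ((3 * 2 ^ m : ℕ) : ZMod (3 * 2 ^ m)) = 0 := ZMod.natCast_self _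
  have hzero' : (3 : ZMod (3 * 2 ^ m)) * 2 ^ m = 0 := by push_cast at hzero; linear_combination hzero
  have hneg : -(2 ^ m : ZMod (3 * 2 ^ m)) = 2 ^ (m + 1) := by linear_combination -hzero'
  have hne1 : (0 : ZMod (3 * 2 ^ m)) ≠ (2 ^ m : ZMod (3 * 2 ^ m)) := by
    intro h; have := congrArg ZMod.val h
    rw [ZMod.val_zero, ← hc1, hv1] at this; omega
  have hne2 : (0 : ZMod (3 * 2 ^ m)) ≠ (2 ^ (m + 1) : ZMod (3 * 2 ^ m)) := by
    intro h; have := congrArg ZMod.val h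
    rw [ZMod.val_zero, ← hc2, hv2] at this
    rw [pow_succ] at this; omega
  have hne3 : (2 ^ m : ZMod (3 * 2 ^ m)) ≠ (2 ^ (m + 1) : ZMod (3 * 2 ^ m)) := by
    intro h; have := congrArg ZMod.val h
    rw [← hc1, ← hc2, hv1, hv2] at this
    rw [pow_succ] at this; omega
  have hd3 : (2 ^ (m + 1) : ZMod (3 * 2 ^ m)) - 2 ^ m = 2 ^ m := by rw [pow_succ]; ring
  constructor
  · rw [SimpleGraph.is3Clique_triple_iff]
    refine ⟨?_, ?_, ?_⟩ <;> rw [circulant, SimpleGraph.fromRel_adj]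
    · exact ⟨hne1, Or.inl (by rw [sub_zero, hr1]; exact hmem)⟩
    · exact ⟨hne2, Or.inl (by rw [sub_zero, hr2]; exact hmem)⟩
    · exact ⟨hne3, Or.inl (by rw [hd3, hr1]; exact hmem)⟩
  · intro a b hcl h1 h2
    obtain ⟨h0a, h0b, hab⟩ := triple_card_ne hcl.card_eq
    have ca := redAbs_cases a
    have cb := redAbs_cases b
    have cc := redAbs_cases (b - a)
    rw [← h1] at cb
    rw [← h2, ← h1] at cc
    have hd0 : 0 < redAbs (3 * 2 ^ m) a := by
      rcases Nat.eq_zero_or_pos (redAbs (3 * 2 ^ m) a) with h | h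
      · exfalso
        rcases ca with h' | h' <;> rw [h] at h' <;> simp at h' <;> exact h0a h'.symm
      · exact h
    have h2le := redAbs_two_mul_le a
    -- derive the value of d in the nontrivial cases
    have finish3 : ((3 * redAbs (3 * 2 ^ m) a : ℕ) : ZMod (3 * 2 ^ m)) = 0 →
        redAbs (3 * 2 ^ m) a = 2 ^ m := by
      intro h3
      rw [ZMod.natCast_eq_zero_iff] at h3
      have := three_eq (by omega) h3 hd0 h2le
      omega
    rcases ca with ha | ha <;> rcases cb with hb | hb
    · exact absurd (ha.trans hb.symm) hab
    · -- a = D, b = -D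
      have hdval : redAbs (3 * 2 ^ m) a = 2 ^ m := by
        apply finish3
        rcases cc with hc | hc
        · push_cast
          linear_combination -hc + hb - ha
        · exact absurd (show (0 : ZMod (3 * 2 ^ m)) = a by linear_combination -hb + hc) h0a
      have ha' : a = (2 ^ m : ZMod (3 * 2 ^ m)) := by rw [ha, hdval]; exact hc1
      have hb' : b = (2 ^ (m + 1) : ZMod (3 * 2 ^ m)) := by
        rw [hb, hdval, hc1]; exact hneg
      rw [ha', hb']
    · -- a = -D, b = D
      have hdval : redAbs (3 * 2 ^ m) a = 2 ^ m := by
        apply finish3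
        rcases cc with hc | hc
        · exact absurd (show (0 : ZMod (3 * 2 ^ m)) = a by linear_combination -hb + hc) h0a
        · push_cast
          linear_combination ha - hb + hc
      have ha' : a = (2 ^ (m + 1) : ZMod (3 * 2 ^ m)) := by
        rw [ha, hdval, hc1]; exact hneg
      have hb' : b = (2 ^ m : ZMod (3 * 2 ^ m)) := by rw [hb, hdval]; exact hc1
      rw [ha', hb']
      exact congrArg (insert 0) (Finset.pair_comm _ _)
    · exact absurd (ha.trans hb.symm) hab
end

section
/- Let Δ be a pure 1-dimensional simplicial complex (i.e., a graph, every maximal face an edge). Then Δ is vertex decomposable if and only if Δ is connected. -/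
/-- An abstract simplicial complex on vertex type `V` (faces closed under subsets). -/
structure SC (V : Type) where
  faces : Set (Finset V)
  down_closed : ∀ ⦃s t : Finset V⦄, s ∈ faces → t ⊆ s → t ∈ faces

variable {V : Type} [DecidableEq V]

/-- The deletion of a vertex. -/
def SC.del (Δ : SC V) (x : V) : SC V where
  faces := {F | x ∉ F ∧ F ∈ Δ.faces}
  down_closed := fun s t hs hts =>
    ⟨fun h => hs.1 (hts h), Δ.down_closed hs.2 hts⟩

/-- The link of a vertex. -/
def SC.link (Δ : SC V) (x : V) : SC V where
  faces := {F | x ∉ F ∧ insert x F ∈ Δ.faces}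
  down_closed := fun s t hs hts =>
    ⟨fun h => hs.1 (hts h), Δ.down_closed hs.2 (Finset.insert_subset_insert x hts)⟩

/-- A facet: a maximal face. -/
def SC.facet (Δ : SC V) (F : Finset V) : Prop :=
  F ∈ Δ.faces ∧ ∀ G ∈ Δ.faces, F ⊆ G → F = G

/-- The 1-skeleton graph of a simplicial complex, on its vertex set. -/
def SC.skeleton (Δ : SC V) : SimpleGraph {v : V // ({v} : Finset V) ∈ Δ.faces} :=
  SimpleGraph.fromRel (fun u v => ({u.1, v.1} : Finset V) ∈ Δ.faces)

/-- Connectivity of a simplicial complex (connectivity of its 1-skeleton). -/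
def SC.Conn (Δ : SC V) : Prop := Δ.skeleton.Connected

/-- Vertex decomposability. -/
inductive VD : SC V → Prop
  | point (Δ : SC V) : Δ.faces = {∅} → VD Δ
  | simplex (Δ : SC V) (F : Finset V) : Δ.faces = {s : Finset V | s ⊆ F} → VD Δ
  | shed (Δ : SC V) (x : V) : ({x} : Finset V) ∈ Δ.faces →
      VD (Δ.link x) → VD (Δ.del x) →
      (∀ F : Finset V, (Δ.del x).facet F → Δ.facet F) → VD Δ

/-!
A vertex decomposition sheds a vertex `x` whose deletion is again a pure graph; by induction
that deletion is connected, and `x` is joined to it by an edge, so `Δ` is connected.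
Conversely, a connected graph with at least three vertices has a vertex `x` whose removal keeps
it connected (a leaf of a spanning tree). Then `del x` is a connected graph on at least two
vertices, hence pure of dimension one, so its facets are edges and thus facets of `Δ`, and
induction applies to it; the link of `x` is a nonempty `0`-dimensional complex, which is vertex
decomposable by shedding its points one at a time. With at most two vertices, `Δ` is an edge.
-/

open Finset

namespace SC

variable {W : Type} (Δ : SC W)

def vertexSet : Set W := {v | {v} ∈ Δ.faces}

theorem exists_facet_superset [Finite W] {F : Finset W} (hF : F ∈ Δ.faces) :
    ∃ G, Δ.facet G ∧ F ⊆ G := by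
  obtain ⟨G, hFG, hG⟩ := Δ.faces.toFinite.exists_le_maximal hF
  exact ⟨G, ⟨hG.1, fun H hH hGH => le_antisymm hGH (hG.2 hH hGH)⟩, hFG⟩

theorem card_le_of_forall_facet_card_eq [Finite W] {n : ℕ}
    (hpure : ∀ F, Δ.facet F → F.card = n) {F : Finset W} (hF : F ∈ Δ.faces) : F.card ≤ n := by
  obtain ⟨G, hG, hFG⟩ := Δ.exists_facet_superset hF
  exact hpure G hG ▸ card_le_card hFG

theorem exists_face_card_eq_of_forall_facet_card_eq [Finite W] {n : ℕ}
    (hpure : ∀ F, Δ.facet F → F.card = n) (h0 : ∅ ∈ Δ.faces) : ∃ F ∈ Δ.faces, F.card = n := by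
  obtain ⟨G, hG, -⟩ := Δ.exists_facet_superset h0
  exact ⟨G, hG.1, hpure G hG⟩

theorem facet_of_card_eq {n : ℕ} (hle : ∀ G ∈ Δ.faces, G.card ≤ n) {F : Finset W}
    (hF : F ∈ Δ.faces) (hcard : F.card = n) : Δ.facet F :=
  ⟨hF, fun G hG hFG => eq_of_subset_of_card_le hFG (hcard ▸ hle G hG)⟩

theorem card_eq_of_facet {n : ℕ} (hle : ∀ G ∈ Δ.faces, G.card ≤ n)
    (hext : ∀ G ∈ Δ.faces, G.card < n → ∃ H ∈ Δ.faces, G ⊂ H) {F : Finset W}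
    (hF : Δ.facet F) : F.card = n := by
  refine (hle F hF.1).antisymm (not_lt.mp fun hlt => ?_)
  obtain ⟨H, hH, hFH⟩ := hext F hF.1 hlt
  exact hFH.ne (hF.2 H hH hFH.subset)

theorem facet_of_facet_del {n : ℕ} (hle : ∀ G ∈ Δ.faces, G.card ≤ n) {x : W}
    (hdel : ∀ F, (Δ.del x).facet F → F.card = n) {F : Finset W} (hF : (Δ.del x).facet F) :
    Δ.facet F :=
  Δ.facet_of_card_eq hle hF.1.2 (hdel F hF)

theorem faces_eq_of_forall_vertex_mem {F : Finset W} (hF : F ∈ Δ.faces)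
    (hv : ∀ v, {v} ∈ Δ.faces → v ∈ F) : Δ.faces = {s | s ⊆ F} := by
  ext s
  exact ⟨fun hs v hvs => hv v (Δ.down_closed hs (singleton_subset_iff.mpr hvs)),
    fun hsF => Δ.down_closed hF hsF⟩

theorem singleton_mem_del_faces {x v : W} : {v} ∈ (Δ.del x).faces ↔ v ≠ x ∧ {v} ∈ Δ.faces :=
  and_congr_left' (mem_singleton.not.trans ne_comm)

theorem vertexSet_del (x : W) : (Δ.del x).vertexSet = Δ.vertexSet \ {x} := by
  ext v
  exact (Δ.singleton_mem_del_faces).trans and_comm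

theorem ncard_vertexSet_del_lt [Finite W] {x : W} (hx : {x} ∈ Δ.faces) :
    (Δ.del x).vertexSet.ncard < Δ.vertexSet.ncard := by
  rw [vertexSet_del]
  exact Set.ncard_sdiff_singleton_lt_of_mem hx

variable [DecidableEq W]

theorem exists_edge_of_forall_facet_card_eq_two [Finite W]
    (hpure : ∀ F, Δ.facet F → F.card = 2) {v : W} (hv : {v} ∈ Δ.faces) :
    ∃ u ≠ v, {v, u} ∈ Δ.faces := by
  obtain ⟨G, hG, hvG⟩ := Δ.exists_facet_superset hv
  obtain ⟨a, b, hab, rfl⟩ := card_eq_two.mp (hpure G hG)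
  rcases mem_insert.mp (singleton_subset_iff.mp hvG) with rfl | hvb
  · exact ⟨b, hab.symm, hG.1⟩
  · obtain rfl := mem_singleton.mp hvb
    exact ⟨a, hab, pair_comm a v ▸ hG.1⟩

theorem card_le_of_mem_link {n : ℕ} (hle : ∀ G ∈ Δ.faces, G.card ≤ n + 1) {x : W}
    {F : Finset W} (hF : F ∈ (Δ.link x).faces) : F.card ≤ n := by
  have := hle _ hF.2
  rw [card_insert_of_notMem hF.1] at this
  omega

theorem vd_of_card_le_one [Finite W] (h1 : ∀ F ∈ Δ.faces, F.card ≤ 1) (h0 : ∅ ∈ Δ.faces) :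
    VD Δ := by
  induction hn : Δ.vertexSet.ncard using Nat.strong_induction_on generalizing Δ with
  | _ n ih =>
  by_cases htwo : ∃ v w, v ≠ w ∧ {v} ∈ Δ.faces ∧ {w} ∈ Δ.faces
  · obtain ⟨v, w, hvw, hv, hw⟩ := htwo
    have hw_del : {w} ∈ (Δ.del v).faces := Δ.singleton_mem_del_faces.mpr ⟨hvw.symm, hw⟩
    have hlink : (Δ.link v).faces = {∅} := by
      ext F
      refine ⟨fun hF => card_eq_zero.mp (Nat.le_zero.mp (Δ.card_le_of_mem_link h1 hF)), ?_⟩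
      rintro rfl
      exact ⟨notMem_empty v, hv⟩
    have hdel_card : ∀ F, (Δ.del v).facet F → F.card = 1 :=
      fun F => (Δ.del v).card_eq_of_facet (fun G hG => h1 G hG.2) fun G _ hG =>
        ⟨{w}, hw_del, card_eq_zero.mp (Nat.lt_one_iff.mp hG) ▸ (singleton_nonempty w).empty_ssubset⟩
    exact .shed Δ v hv (.point _ hlink)
      (ih _ (hn ▸ Δ.ncard_vertexSet_del_lt hv) _ (fun F hF => h1 F hF.2)
        ⟨notMem_empty v, h0⟩ rfl)
      fun F => Δ.facet_of_facet_del h1 hdel_card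
  · push Not at htwo
    by_cases hv : ∃ v, {v} ∈ Δ.faces
    · obtain ⟨v, hv⟩ := hv
      exact .simplex Δ {v} <| Δ.faces_eq_of_forall_vertex_mem hv fun w hw =>
        mem_singleton.mpr (not_not.mp fun hwv => htwo w v hwv hw hv)
    · exact .simplex Δ ∅ <| Δ.faces_eq_of_forall_vertex_mem h0 fun w hw => (hv ⟨w, hw⟩).elim

theorem skeleton_adj {u v : {v : W // {v} ∈ Δ.faces}} :
    Δ.skeleton.Adj u v ↔ u ≠ v ∧ {u.1, v.1} ∈ Δ.faces := by
  rw [skeleton, SimpleGraph.fromRel_adj, pair_comm v.1, or_self]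

theorem conn_of_faces_eq {F : Finset W} (h : Δ.faces = {s | s ⊆ F}) (hF : F.Nonempty) :
    Δ.Conn := by
  have hmem (v : {v : W // {v} ∈ Δ.faces}) : v.1 ∈ F :=
    singleton_subset_iff.mp (h ▸ v.2 : {v.1} ∈ {s : Finset W | s ⊆ F})
  obtain ⟨a, ha⟩ := hF
  let A : {v : W // {v} ∈ Δ.faces} := ⟨a, h ▸ singleton_subset_iff.mpr ha⟩
  refine SimpleGraph.connected_iff_exists_forall_reachable _ |>.mpr ⟨A, fun v => ?_⟩
  rcases eq_or_ne A v with rfl | hav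
  · rfl
  · have hface : {a, v.1} ∈ Δ.faces :=
      (Set.ext_iff.mp h _).mpr (insert_subset ha (singleton_subset_iff.mpr (hmem v)))
    exact (Δ.skeleton_adj.mpr ⟨hav, hface⟩).reachable

def delSkeletonIso (X : {v : W // {v} ∈ Δ.faces}) :
    (Δ.del X.1).skeleton ≃g Δ.skeleton.induce {X}ᶜ where
  toFun v := ⟨⟨v.1, v.2.2⟩, fun h => v.2.1 (by simp [← congrArg Subtype.val h])⟩
  invFun v := ⟨v.1.1, fun h => v.2 (Subtype.ext (mem_singleton.mp h).symm), v.1.2⟩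
  left_inv _ := rfl
  right_inv _ := rfl
  map_rel_iff' {u v} := by
    have hu : X.1 ≠ u.1 := by simpa using u.2.1
    have hv : X.1 ≠ v.1 := by simpa using v.2.1
    change Δ.skeleton.Adj ⟨u.1, u.2.2⟩ ⟨v.1, v.2.2⟩ ↔ (Δ.del X.1).skeleton.Adj u v
    rw [skeleton_adj, skeleton_adj]
    exact and_congr (by simp [Subtype.ext_iff]) ⟨fun h => ⟨by simp [hu, hv], h⟩, And.right⟩

theorem conn_of_conn_del {x y : W} (hxy : {x, y} ∈ Δ.faces) (hyx : y ≠ x)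
    (h : (Δ.del x).Conn) : Δ.Conn := by
  have hx : {x} ∈ Δ.faces := Δ.down_closed hxy (by simp)
  have hy : {y} ∈ Δ.faces := Δ.down_closed hxy (by simp)
  let X : {v : W // {v} ∈ Δ.faces} := ⟨x, hx⟩
  let Y : {v : W // {v} ∈ Δ.faces} := ⟨y, hy⟩
  have hYX : Y ≠ X := fun h => hyx (congrArg Subtype.val h)
  have hind := (Δ.delSkeletonIso X).connected_iff.mp h
  have hreach (u) : Δ.skeleton.Reachable u Y := by
    by_cases hu : u = X
    · exact hu ▸ (Δ.skeleton_adj.mpr ⟨hYX.symm, hxy⟩).reachable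
    · exact (hind.preconnected ⟨u, hu⟩ ⟨Y, hYX⟩).map (SimpleGraph.Embedding.induce _).toHom
  exact SimpleGraph.connected_iff_exists_forall_reachable _ |>.mpr
    ⟨Y, fun u => (hreach u).symm⟩

theorem Conn.exists_edge {Δ : SC W} (h : Δ.Conn) {v w : W} (hv : {v} ∈ Δ.faces)
    (hw : {w} ∈ Δ.faces) (hvw : v ≠ w) {u : W} (hu : {u} ∈ Δ.faces) :
    ∃ u' ≠ u, {u, u'} ∈ Δ.faces := by
  have : Nontrivial {v : W // {v} ∈ Δ.faces} :=
    ⟨⟨v, hv⟩, ⟨w, hw⟩, fun h => hvw (congrArg Subtype.val h)⟩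
  obtain ⟨u', hadj⟩ := h.preconnected.exists_adj_of_nontrivial ⟨u, hu⟩
  obtain ⟨hne, hface⟩ := Δ.skeleton_adj.mp hadj
  exact ⟨u'.1, fun h => hne (Subtype.ext h.symm), hface⟩

theorem forall_facet_card_eq_two_of_conn (h2 : ∀ F ∈ Δ.faces, F.card ≤ 2) (hconn : Δ.Conn)
    {v w : W} (hv : {v} ∈ Δ.faces) (hw : {w} ∈ Δ.faces) (hvw : v ≠ w) :
    ∀ F, Δ.facet F → F.card = 2 := by
  refine fun F => Δ.card_eq_of_facet h2 fun G hG hcard => ?_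
  interval_cases hG' : G.card
  · exact ⟨{v}, hv, card_eq_zero.mp hG' ▸ (singleton_nonempty v).empty_ssubset⟩
  · obtain ⟨u, rfl⟩ := card_eq_one.mp hG'
    obtain ⟨u', hu'u, hface⟩ := hconn.exists_edge hv hw hvw hG
    exact ⟨{u', u}, pair_comm u u' ▸ hface, ssubset_insert (mem_singleton.not.mpr hu'u)⟩

theorem exists_conn_del [Finite W] (hconn : Δ.Conn) {v w : W} (hv : {v} ∈ Δ.faces)
    (hw : {w} ∈ Δ.faces) (hvw : v ≠ w) : ∃ x, {x} ∈ Δ.faces ∧ (Δ.del x).Conn := by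
  have : Nontrivial {v : W // {v} ∈ Δ.faces} :=
    ⟨⟨v, hv⟩, ⟨w, hw⟩, fun h => hvw (congrArg Subtype.val h)⟩
  obtain ⟨X, hX⟩ := hconn.exists_connected_induce_compl_singleton_of_finite_nontrivial
  exact ⟨X.1, X.2, (Δ.delSkeletonIso X).connected_iff.mpr hX⟩

theorem conn_of_vd [Finite W] {Δ : SC W} (h : VD Δ) (hpure : ∀ F, Δ.facet F → F.card = 2)
    (hdim : ∃ F ∈ Δ.faces, F.card = 2) : Δ.Conn := by
  induction h with
  | point Δ hpt =>
    obtain ⟨F, hF, hcard⟩ := hdim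
    rw [hpt, Set.mem_singleton_iff] at hF
    simp [hF] at hcard
  | simplex Δ F hsimp =>
    have hF : Δ.facet F := ⟨(Set.ext_iff.mp hsimp F).mpr (subset_refl F),
      fun G hG hFG => hFG.antisymm ((Set.ext_iff.mp hsimp G).mp hG)⟩
    exact Δ.conn_of_faces_eq hsimp (card_pos.mp (by rw [hpure F hF]; norm_num))
  | shed Δ x hx _ _ hfac _ ihdel =>
    obtain ⟨y, hyx, hxy⟩ := Δ.exists_edge_of_forall_facet_card_eq_two hpure hx
    have hpure_del : ∀ F, (Δ.del x).facet F → F.card = 2 := fun F hF => hpure F (hfac F hF)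
    have hdim_del := (Δ.del x).exists_face_card_eq_of_forall_facet_card_eq hpure_del
      ⟨notMem_empty x, Δ.down_closed hx (empty_subset _)⟩
    exact Δ.conn_of_conn_del hxy hyx (ihdel hpure_del hdim_del)

theorem vd_of_conn [Finite W] (hpure : ∀ F, Δ.facet F → F.card = 2)
    (hdim : ∃ F ∈ Δ.faces, F.card = 2) (hconn : Δ.Conn) : VD Δ := by
  induction hn : Δ.vertexSet.ncard using Nat.strong_induction_on generalizing Δ with
  | _ n ih =>
  have h2 : ∀ F ∈ Δ.faces, F.card ≤ 2 := fun F => Δ.card_le_of_forall_facet_card_eq hpure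
  obtain ⟨F₀, hF₀, hF₀card⟩ := hdim
  by_cases hall : ∀ v, {v} ∈ Δ.faces → v ∈ F₀
  · exact .simplex Δ F₀ (Δ.faces_eq_of_forall_vertex_mem hF₀ hall)
  push Not at hall
  obtain ⟨c, hc, hcF₀⟩ := hall
  obtain ⟨a, b, hab, rfl⟩ := card_eq_two.mp hF₀card
  have ha : {a} ∈ Δ.faces := Δ.down_closed hF₀ (by simp)
  have hb : {b} ∈ Δ.faces := Δ.down_closed hF₀ (by simp)
  obtain ⟨x, hx, hconn_del⟩ := Δ.exists_conn_del hconn ha hb hab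
  obtain ⟨v, w, hvw, hv, hw⟩ :
      ∃ v w, v ≠ w ∧ {v} ∈ (Δ.del x).faces ∧ {w} ∈ (Δ.del x).faces := by
    simp only [mem_insert, mem_singleton, not_or] at hcF₀
    simp only [singleton_mem_del_faces]
    rcases eq_or_ne a x with rfl | hax
    · exact ⟨b, c, fun h => hcF₀.2 h.symm, ⟨hab.symm, hb⟩, ⟨hcF₀.1, hc⟩⟩
    rcases eq_or_ne b x with rfl | hbx
    · exact ⟨a, c, fun h => hcF₀.1 h.symm, ⟨hab, ha⟩, ⟨hcF₀.2, hc⟩⟩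
    · exact ⟨a, b, hab, ⟨hax, ha⟩, ⟨hbx, hb⟩⟩
  have hpure_del := (Δ.del x).forall_facet_card_eq_two_of_conn (fun F hF => h2 F hF.2)
    hconn_del hv hw hvw
  have hdim_del := (Δ.del x).exists_face_card_eq_of_forall_facet_card_eq hpure_del
    ⟨notMem_empty x, Δ.down_closed hx (empty_subset _)⟩
  have hvd_link : VD (Δ.link x) :=
    vd_of_card_le_one _ (fun F => Δ.card_le_of_mem_link h2) ⟨notMem_empty x, hx⟩
  have hvd_del : VD (Δ.del x) :=
    ih _ (hn ▸ Δ.ncard_vertexSet_del_lt hx) _ hpure_del hdim_del hconn_del rfl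
  exact .shed Δ x hx hvd_link hvd_del fun F => Δ.facet_of_facet_del h2 hpure_del

end SC

theorem one_dim_vd_iff_connected {W : Type} [Fintype W] [DecidableEq W] (Δ : SC W)
    (hpure : ∀ F : Finset W, Δ.facet F → F.card = 2)
    (hdim : ∃ F ∈ Δ.faces, F.card = 2) :
    VD Δ ↔ Δ.Conn :=
  ⟨fun h => SC.conn_of_vd h hpure hdim, Δ.vd_of_conn hpure hdim⟩
end
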